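/- Let (k₁,…,k_d) be an admissible multi-index and r a positive integer. Then for every q ∈ (0,1), ζ[k₁,…,k_d; r : q) < ζ[k₁,…,k_d, 1 : q]. -/

import Mathlib

open Finset Filter

/-- The q-integer [m:q] = (1-q^m)/(1-q). -/
noncomputable def qint (q : ℝ) (m : ℕ) : ℝ := (1 - q ^ m) / (1 - q)

/-- Tail of the multiple q-zeta value: sum over m₁ > ⋯ > m_d > n. -/
noncomputable def qZeta {d : ℕ} (q : ℝ) (k : Fin d → ℕ) (n : ℕ) : ℝ :=
  ∑' m : {m : Fin d → ℕ // StrictAnti m ∧ ∀ i, n < m i},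
    ∏ i, q ^ (m.1 i * (k i - 1)) / (qint q (m.1 i)) ^ (k i)

/-- The modified multiple q-zeta value ζ[k₁,…,k_d; r : q). -/
noncomputable def qZetaR {d : ℕ} (q : ℝ) (k : Fin d → ℕ) (r : ℕ) : ℝ :=
  ∑' m : {m : Fin (d + 1) → ℕ // StrictAnti m ∧ ∀ i, 0 < m i},
    (∏ i : Fin d, q ^ (m.1 i.castSucc * (k i - 1)) / (qint q (m.1 i.castSucc)) ^ (k i))
      / (m.1 (Fin.last d) : ℝ) ^ r

/-- Multiple zeta value. -/
noncomputable def mzv {d : ℕ} (k : Fin d → ℕ) : ℝ :=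
  ∑' m : {m : Fin d → ℕ // StrictAnti m ∧ ∀ i, 0 < m i},
    ∏ i, (1 : ℝ) / (m.1 i : ℝ) ^ (k i)

/-- Akhilesh's double tail of a multiple zeta value. -/
noncomputable def dtail {d : ℕ} (hd : 0 < d) (k : Fin d → ℕ) (p n : ℕ) : ℝ :=
  ∑' m : {m : Fin d → ℕ // StrictAnti m ∧ ∀ i, n < m i},
    ((Nat.choose (m.1 ⟨0, hd⟩ + p) p : ℝ))⁻¹ * ∏ i, (1 : ℝ) / (m.1 i : ℝ) ^ (k i)

/-!
Both sides are sums over the same tuples `m₁ > ⋯ > m_{d+1} > 0`, and their summands differ only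
in the last factor: `1 / m_{d+1}^r` on the left, `1 / [m_{d+1}:q]` on the right. Since
`[m:q] = 1 + q + ⋯ + q^{m-1} ≤ m ≤ m^r`, with `[2:q] = 1 + q < 2 ≤ 2^r`, the comparison is
termwise and strict at one tuple. The right-hand side converges because `k₁ ≥ 2` makes each
summand at most `q^{m₁}`, and `q^{m₁} ≤ Q^{m₁ + ⋯ + m_{d+1}}` for `Q = q^{1/(d+1)}`.
-/

section QInt

variable {q : ℝ}

lemma qint_eq_geom_sum (hq : q ≠ 1) (m : ℕ) : qint q m = ∑ i ∈ range m, q ^ i := by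
  rw [geom_sum_eq hq, qint, ← neg_sub (q ^ m) 1, ← neg_sub q 1, neg_div_neg_eq]

lemma qint_two (hq : q ≠ 1) : qint q 2 = 1 + q := by
  simp [qint_eq_geom_sum hq, sum_range_succ]

lemma one_le_qint (hq0 : 0 ≤ q) (hq1 : q ≠ 1) {m : ℕ} (hm : 0 < m) : 1 ≤ qint q m := by
  rw [qint_eq_geom_sum hq1]
  simpa using single_le_sum (f := fun i => q ^ i) (fun i _ => pow_nonneg hq0 i)
    (mem_range.2 hm)

lemma qint_pos (hq0 : 0 ≤ q) (hq1 : q ≠ 1) {m : ℕ} (hm : 0 < m) : 0 < qint q m :=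
  one_pos.trans_le (one_le_qint hq0 hq1 hm)

lemma qint_le_natCast (hq0 : 0 ≤ q) (hq1 : q < 1) (m : ℕ) : qint q m ≤ m := by
  rw [qint_eq_geom_sum hq1.ne]
  simpa using sum_le_sum fun i (_ : i ∈ range m) => pow_le_one₀ hq0 hq1.le

lemma div_natCast_pow_le_div_qint (hq0 : 0 ≤ q) (hq1 : q < 1) {a : ℝ} (ha : 0 ≤ a) {m r : ℕ}
    (hm : 0 < m) (hr : r ≠ 0) : a / (m : ℝ) ^ r ≤ a / qint q m := by
  apply div_le_div_of_nonneg_left ha (qint_pos hq0 hq1.ne hm)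
  calc qint q m ≤ m := qint_le_natCast hq0 hq1 m
    _ ≤ (m : ℝ) ^ r := le_self_pow₀ (by exact_mod_cast hm) hr

lemma div_two_pow_lt_div_qint_two (hq0 : 0 ≤ q) (hq1 : q < 1) {a : ℝ} (ha : 0 < a) {r : ℕ}
    (hr : r ≠ 0) : a / (2 : ℝ) ^ r < a / qint q 2 := by
  rw [qint_two hq1.ne]
  apply div_lt_div_of_pos_left ha (by linarith)
  calc 1 + q < 2 := by linarith
    _ ≤ (2 : ℝ) ^ r := le_self_pow₀ one_le_two hr

end QInt

section Summability

variable {q : ℝ}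

lemma summable_prod_pow (hq0 : 0 ≤ q) (hq1 : q < 1) (n : ℕ) :
    Summable fun m : Fin n → ℕ => ∏ i, q ^ m i := by
  induction n with
  | zero => exact Summable.of_finite
  | succ n ih =>
    have h := ((summable_geometric_of_lt_one hq0 hq1).mul_of_nonneg ih (fun _ => by positivity)
      fun _ => prod_nonneg fun _ _ => by positivity).comp_injective
      (Fin.consEquiv fun _ => ℕ).symm.injective
    refine h.congr fun m => ?_
    rw [Fin.prod_univ_succ]
    rfl

lemma summable_pow_apply_zero_of_antitone (hq0 : 0 ≤ q) (hq1 : q < 1) {n : ℕ}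
    (s : Set (Fin (n + 1) → ℕ)) (hs : ∀ m ∈ s, Antitone m) :
    Summable fun m : s => q ^ m.1 0 := by
  set Q := q ^ ((n : ℝ) + 1)⁻¹
  have hQ0 : 0 ≤ Q := Real.rpow_nonneg hq0 _
  have hQ1 : Q < 1 := Real.rpow_lt_one hq0 hq1 (by positivity)
  have hQpow : Q ^ (n + 1) = q := by
    rw [← Real.rpow_natCast, ← Real.rpow_mul hq0, Nat.cast_succ,
      inv_mul_cancel₀ (by positivity), Real.rpow_one]
  refine Summable.of_nonneg_of_le (fun _ => pow_nonneg hq0 _) (fun m => ?_)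
    ((summable_prod_pow hQ0 hQ1 (n + 1)).subtype s)
  have hsum : ∑ i, m.1 i ≤ (n + 1) * m.1 0 := by
    simpa [mul_comm] using sum_le_card_nsmul univ m.1 (m.1 0)
      fun i _ => hs m.1 m.2 (Fin.zero_le i)
  calc q ^ m.1 0 = Q ^ ((n + 1) * m.1 0) := by rw [pow_mul, hQpow]
    _ ≤ Q ^ ∑ i, m.1 i := pow_le_pow_of_le_one hQ0 hQ1.le hsum
    _ = ∏ i, Q ^ m.1 i := (prod_pow_eq_pow_sum _ _ _).symm

end Summability

section QZetaTerm

variable {q : ℝ} {d : ℕ}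

noncomputable def qZetaTerm (q : ℝ) (k m : Fin d → ℕ) : ℝ :=
  ∏ i, q ^ (m i * (k i - 1)) / qint q (m i) ^ k i

lemma qZeta_eq_tsum_qZetaTerm (k : Fin d → ℕ) (n : ℕ) :
    qZeta q k n = ∑' m : {m : Fin d → ℕ // StrictAnti m ∧ ∀ i, n < m i}, qZetaTerm q k m.1 :=
  rfl

lemma qZetaR_eq_tsum_qZetaTerm (k : Fin d → ℕ) (r : ℕ) :
    qZetaR q k r = ∑' m : {m : Fin (d + 1) → ℕ // StrictAnti m ∧ ∀ i, 0 < m i},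
      qZetaTerm q k (Fin.init m.1) / (m.1 (Fin.last d) : ℝ) ^ r :=
  rfl

lemma qZetaTerm_snoc_one (k : Fin d → ℕ) (m : Fin (d + 1) → ℕ) :
    qZetaTerm q (Fin.snoc k 1) m = qZetaTerm q k (Fin.init m) / qint q (m (Fin.last d)) := by
  simp [qZetaTerm, Fin.prod_univ_castSucc, Fin.init, div_eq_mul_inv]

lemma qZetaTerm_nonneg (hq0 : 0 ≤ q) (hq1 : q ≠ 1) (k : Fin d → ℕ) {m : Fin d → ℕ}
    (hm : ∀ i, 0 < m i) : 0 ≤ qZetaTerm q k m :=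
  prod_nonneg fun i _ => div_nonneg (pow_nonneg hq0 _) (pow_nonneg (qint_pos hq0 hq1 (hm i)).le _)

lemma qZetaTerm_pos (hq0 : 0 < q) (hq1 : q ≠ 1) (k : Fin d → ℕ) {m : Fin d → ℕ}
    (hm : ∀ i, 0 < m i) : 0 < qZetaTerm q k m :=
  prod_pos fun i _ => div_pos (pow_pos hq0 _) (pow_pos (qint_pos hq0.le hq1 (hm i)) _)

lemma qZetaTerm_le_pow_apply_zero (hq0 : 0 ≤ q) (hq1 : q < 1) {k m : Fin (d + 1) → ℕ}
    (hk0 : 2 ≤ k 0) (hm : ∀ i, 0 < m i) : qZetaTerm q k m ≤ q ^ m 0 := by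
  have hfactor (i : Fin (d + 1)) :
      q ^ (m i * (k i - 1)) / qint q (m i) ^ k i ≤ q ^ (m i * (k i - 1)) :=
    div_le_self (pow_nonneg hq0 _) (one_le_pow₀ (one_le_qint hq0 hq1.ne (hm i)))
  have hhead : q ^ (m 0 * (k 0 - 1)) ≤ q ^ m 0 :=
    pow_le_pow_of_le_one hq0 hq1.le (Nat.le_mul_of_pos_right _ (by omega))
  have htail : ∏ i : Fin d, q ^ (m i.succ * (k i.succ - 1)) / qint q (m i.succ) ^ k i.succ ≤ 1 :=
    prod_le_one (fun i _ => div_nonneg (pow_nonneg hq0 _)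
        (pow_nonneg (qint_pos hq0 hq1.ne (hm _)).le _))
      fun i _ => (hfactor i.succ).trans (pow_le_one₀ hq0 hq1.le)
  rw [qZetaTerm, Fin.prod_univ_succ]
  calc _ ≤ q ^ m 0 * 1 :=
        mul_le_mul ((hfactor 0).trans hhead) htail
          (prod_nonneg fun i _ => div_nonneg (pow_nonneg hq0 _)
            (pow_nonneg (qint_pos hq0 hq1.ne (hm _)).le _))
          (pow_nonneg hq0 _)
    _ = q ^ m 0 := mul_one _

lemma summable_qZetaTerm (hq0 : 0 ≤ q) (hq1 : q < 1) {k : Fin (d + 1) → ℕ} (hk0 : 2 ≤ k 0) :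
    Summable fun m : {m : Fin (d + 1) → ℕ // StrictAnti m ∧ ∀ i, 0 < m i} =>
      qZetaTerm q k m.1 :=
  Summable.of_nonneg_of_le (fun m => qZetaTerm_nonneg hq0 hq1.ne k m.2.2)
    (fun m => qZetaTerm_le_pow_apply_zero hq0 hq1 hk0 m.2.2)
    (summable_pow_apply_zero_of_antitone hq0 hq1 _ fun _ hm => hm.1.antitone)

lemma qZetaTerm_init_div_pow_le_qZetaTerm_snoc_one (hq0 : 0 ≤ q) (hq1 : q < 1)
    (k : Fin d → ℕ) {m : Fin (d + 1) → ℕ} (hm : ∀ i, 0 < m i) {r : ℕ} (hr : r ≠ 0) :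
    qZetaTerm q k (Fin.init m) / (m (Fin.last d) : ℝ) ^ r ≤ qZetaTerm q (Fin.snoc k 1) m := by
  rw [qZetaTerm_snoc_one]
  exact div_natCast_pow_le_div_qint hq0 hq1 (qZetaTerm_nonneg hq0 hq1.ne k fun _ => hm _) (hm _) hr

lemma qZetaTerm_init_div_pow_lt_qZetaTerm_snoc_one (hq0 : 0 < q) (hq1 : q < 1)
    (k : Fin d → ℕ) {m : Fin (d + 1) → ℕ} (hm : ∀ i, 0 < m i) (hlast : m (Fin.last d) = 2)
    {r : ℕ} (hr : r ≠ 0) :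
    qZetaTerm q k (Fin.init m) / (m (Fin.last d) : ℝ) ^ r < qZetaTerm q (Fin.snoc k 1) m := by
  rw [qZetaTerm_snoc_one, hlast]
  exact_mod_cast div_two_pow_lt_div_qint_two hq0.le hq1
    (qZetaTerm_pos hq0 hq1.ne k fun _ => hm _) hr

end QZetaTerm

lemma exists_strictAnti_pos_last_eq_two (d : ℕ) :
    ∃ m : Fin (d + 1) → ℕ, StrictAnti m ∧ (∀ i, 0 < m i) ∧ m (Fin.last d) = 2 :=
  ⟨fun i => d + 2 - i, fun i j (hij : i.val < j.val) => by dsimp only; omega,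
    fun i => by dsimp only; omega, by simp⟩

theorem stmt7_general (d : ℕ) (hd : 0 < d) (k : Fin d → ℕ) (hk1 : 2 ≤ k ⟨0, hd⟩)
    (r : ℕ) (hr : 0 < r) (q : ℝ) (hq : q ∈ Set.Ioo (0:ℝ) 1) :
    qZetaR q k r < qZeta q (Fin.snoc k 1) 0 := by
  obtain ⟨hq0, hq1⟩ := hq
  have hk0 : 2 ≤ (Fin.snoc k 1 : Fin (d + 1) → ℕ) 0 := by
    rwa [show (0 : Fin (d + 1)) = Fin.castSucc ⟨0, hd⟩ by ext; simp, Fin.snoc_castSucc]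
  have hsum := summable_qZetaTerm hq0.le hq1 hk0
  have hle := fun m : {m : Fin (d + 1) → ℕ // StrictAnti m ∧ ∀ i, 0 < m i} =>
    qZetaTerm_init_div_pow_le_qZetaTerm_snoc_one hq0.le hq1 k m.2.2 hr.ne'
  obtain ⟨m₀, hanti, hpos, hlast⟩ := exists_strictAnti_pos_last_eq_two d
  rw [qZetaR_eq_tsum_qZetaTerm, qZeta_eq_tsum_qZetaTerm]
  refine Summable.tsum_lt_tsum (i := ⟨m₀, hanti, hpos⟩) hle
    (qZetaTerm_init_div_pow_lt_qZetaTerm_snoc_one hq0 hq1 k hpos hlast hr.ne') ?_ hsum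
  exact hsum.of_nonneg_of_le (fun m => div_nonneg
    (qZetaTerm_nonneg hq0.le hq1.ne k fun _ => m.2.2 _) (by positivity)) hle

theorem stmt7 (d : ℕ) (hd : 0 < d) (k : Fin d → ℕ) (hk1 : 2 ≤ k ⟨0, hd⟩)
    (hk : ∀ i, 1 ≤ k i) (r : ℕ) (hr : 0 < r) (q : ℝ) (hq : q ∈ Set.Ioo (0:ℝ) 1) :
    qZetaR q k r < qZeta q (Fin.snoc k 1) 0 :=
  stmt7_general d hd k hk1 r hr q hq
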